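/- arXiv:1904.09486 — 4 statements merged into one kernel-verified Lean document; each statement's English description precedes it below -/
import Mathlib

section
/- Let (a_n) be a sequence with values in {0,1}. Suppose there exist a natural number N ≥ 1 and a set E ⊆ {1,...,N} such that for all indices i_1 < i_2 < ... < i_N, it is not the case that (a_{i_j} = 1 for all j ∈ E and a_{i_j} = 0 for all j ∈ {1,...,N} \ E). Then the number of alternations of the sequence is bounded: ∑_{n=1}^∞ |a_n − a_{n+1}| ≤ 2N. -/
/-!
Among any `2N` alternation indices, every other one gives `N` alternations `m₀ < m₁ < ⋯` with
gaps `m_j + 1 < m_{j+1}`. At an alternation `m` the pair `a m, a (m + 1)` takes both values, so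
any prescribed 0-1 word of length `N` can be read off by choosing `m_j` or `m_j + 1` for each `j`.
-/

open Finset

theorem Finset.exists_spread_of_two_mul_le_card {S : Finset ℕ} {N : ℕ} (h : 2 * N ≤ #S) :
    ∃ m : Fin N → ℕ, (∀ j, m j ∈ S) ∧ ∀ j j', j < j' → m j + 1 < m j' := by
  set g := S.orderEmbOfCardLe h
  refine ⟨fun j => g ⟨2 * j, by omega⟩, fun j => S.orderEmbOfCardLe_mem h _, ?_⟩
  intro j j' hjj'
  dsimp only
  have hj' := j'.isLt
  have hlt : (j : ℕ) < j' := hjj'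
  have h₁ : g ⟨2 * j, by omega⟩ < g ⟨2 * j + 1, by omega⟩ :=
    g.strictMono (Fin.mk_lt_mk.2 (by omega))
  have h₂ : g ⟨2 * j + 1, by omega⟩ < g ⟨2 * j', by omega⟩ :=
    g.strictMono (Fin.mk_lt_mk.2 (by omega))
  omega

section TwoValued

variable {α : Type*} {u v : α}

theorem eq_or_eq_of_ne_of_two_valued {x y t : α} (hx : x = u ∨ x = v) (hy : y = u ∨ y = v)
    (hxy : x ≠ y) (ht : t = u ∨ t = v) : x = t ∨ y = t := by
  rcases hx with rfl | rfl <;> rcases hy with rfl | rfl <;> rcases ht with rfl | rfl <;>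
    simp_all

theorem exists_strictMono_comp_eq_of_two_mul_le_card {a : ℕ → α} (ha : ∀ n, a n = u ∨ a n = v)
    {S : Finset ℕ} (hS : ∀ n ∈ S, a n ≠ a (n + 1)) {N : ℕ} (hcard : 2 * N ≤ #S)
    (t : Fin N → α) (ht : ∀ j, t j = u ∨ t j = v) :
    ∃ i : Fin N → ℕ, StrictMono i ∧ ∀ j, a (i j) = t j := by
  obtain ⟨m, hmS, hm⟩ := S.exists_spread_of_two_mul_le_card hcard
  have hpick : ∀ j, ∃ k, m j ≤ k ∧ k ≤ m j + 1 ∧ a k = t j := fun j =>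
    (eq_or_eq_of_ne_of_two_valued (ha _) (ha _) (hS _ (hmS j)) (ht j)).elim
      (fun h => ⟨m j, le_rfl, by omega, h⟩) (fun h => ⟨m j + 1, by omega, le_rfl, h⟩)
  choose i hmi him hi using hpick
  refine ⟨i, fun j j' hjj' => ?_, hi⟩
  have hgap := hm j j' hjj'
  have hij := him j
  have hij' := hmi j'
  omega

end TwoValued

theorem sum_abs_sub_eq_card_filter_ne {a : ℕ → ℝ} (ha : ∀ n, a n = 0 ∨ a n = 1) (s : Finset ℕ) :
    ∑ n ∈ s, |a n - a (n + 1)| = #{n ∈ s | a n ≠ a (n + 1)} := by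
  rw [natCast_card_filter]
  refine sum_congr rfl fun n _ => ?_
  rcases ha n with h₁ | h₁ <;> rcases ha (n + 1) with h₂ | h₂ <;> norm_num [h₁, h₂]

theorem stmt_0_general (a : ℕ → ℝ) (ha : ∀ n, a n = 0 ∨ a n = 1)
    (N : ℕ) (E : Finset (Fin N))
    (hpat : ∀ i : Fin N → ℕ, StrictMono i →
      ¬ (∀ j : Fin N, (j ∈ E → a (i j) = 1) ∧ (j ∉ E → a (i j) = 0))) :
    ∀ K : ℕ, ∑ n ∈ Finset.range K, |a n - a (n + 1)| ≤ 2 * N := by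
  intro K
  by_contra! hK
  rw [sum_abs_sub_eq_card_filter_ne ha] at hK
  have hcard : 2 * N ≤ #{n ∈ range K | a n ≠ a (n + 1)} := by exact_mod_cast hK.le
  obtain ⟨i, hi, hval⟩ := exists_strictMono_comp_eq_of_two_mul_le_card ha
    (fun n hn => (mem_filter.1 hn).2) hcard (fun j => if j ∈ E then 1 else 0)
    (fun j => by split_ifs <;> simp)
  exact hpat i hi fun j =>
    ⟨fun hj => by simpa [hj] using hval j, fun hj => by simpa [hj] using hval j⟩

/-- If a 0-1 sequence omits some fixed pattern of length `N` (prescribed by `E`)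
along every increasing tuple of indices, then its total variation is at most `2N`. -/
theorem stmt_0 (a : ℕ → ℝ) (ha : ∀ n, a n = 0 ∨ a n = 1)
    (N : ℕ) (hN : 1 ≤ N) (E : Finset (Fin N))
    (hpat : ∀ i : Fin N → ℕ, StrictMono i →
      ¬ (∀ j : Fin N, (j ∈ E → a (i j) = 1) ∧ (j ∉ E → a (i j) = 0))) :
    ∀ K : ℕ, ∑ n ∈ Finset.range K, |a n - a (n + 1)| ≤ 2 * N :=
  stmt_0_general a ha N E hpat
end

section
/- Let (f_n) be a sequence of {0,1}-valued functions on a set X. If there exist a natural number N ≥ 1 and a set E ⊆ {1,...,N} such that for all i_1 < ... < i_N the intersection ⋂_{j∈E} f_{i_j}^{-1}(1) ∩ ⋂_{j∉E} f_{i_j}^{-1}(0) is empty, then there is a natural number M such that ∑_{n=1}^∞ |f_n(x) − f_{n+1}(x)| ≤ M for all x ∈ X; conversely, if such an M exists then such N and E exist. -/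
open Finset

private lemma const_of_no_change (g : ℕ → ℝ) (a b : ℕ) (hab : a ≤ b)
    (h : ∀ n, a ≤ n → n < b → g n = g (n + 1)) : g a = g b := by
  induction b, hab using Nat.le_induction with
  | base => rfl
  | succ b hb ih =>
    rw [ih (fun n h1 h2 => h n h1 (by omega))]
    exact h b hb (by omega)

private lemma exists_change (g : ℕ → ℝ) (a b : ℕ) (hab : a ≤ b) (hne : g a ≠ g b) :
    ∃ n, a ≤ n ∧ n < b ∧ g n ≠ g (n + 1) := by
  by_contra h
  push_neg at h
  exact hne (const_of_no_change g a b hab fun n h1 h2 => h n h1 h2)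

private lemma sum_abs_eq_card (g : ℕ → ℝ) (h01 : ∀ n, g n = 0 ∨ g n = 1) (K : ℕ) :
    ∑ n ∈ Finset.range K, |g n - g (n + 1)| =
      ((Finset.range K).filter (fun n => g n ≠ g (n + 1))).card := by
  rw [Finset.card_filter]
  push_cast
  refine Finset.sum_congr rfl fun n _ => ?_
  rcases h01 n with h1 | h1 <;> rcases h01 (n + 1) with h2 | h2 <;>
    simp [h1, h2]

/-- For a sequence of `{0,1}`-valued functions on a set `X`, the existence of a
forbidden pattern (some `N ≥ 1` and `E ⊆ {1,...,N}` such that the prescribed pattern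
never occurs along increasing indices) is equivalent to a uniform bound on the
number of alternations. -/
theorem stmt_2 {X : Type*} (f : ℕ → X → ℝ) (hf : ∀ n x, f n x = 0 ∨ f n x = 1) :
    (∃ N : ℕ, 1 ≤ N ∧ ∃ E : Finset (Fin N), ∀ i : Fin N → ℕ, StrictMono i →
        ∀ x : X, ¬ (∀ j : Fin N, (j ∈ E → f (i j) x = 1) ∧ (j ∉ E → f (i j) x = 0)))
    ↔ (∃ M : ℕ, ∀ x : X, ∀ K : ℕ,
        ∑ n ∈ Finset.range K, |f n x - f (n + 1) x| ≤ M) := by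
  constructor
  · rintro ⟨N, hN1, E, hE⟩
    refine ⟨2 * N, fun x K => ?_⟩
    by_contra hc
    push_neg at hc
    set g := fun n => f n x with hg
    have h01 : ∀ n, g n = 0 ∨ g n = 1 := fun n => hf n x
    rw [sum_abs_eq_card g h01 K] at hc
    have hcard : 2 * N ≤ ((Finset.range K).filter (fun n => g n ≠ g (n + 1))).card := by
      exact_mod_cast hc.le
    obtain ⟨T', hT'sub, hT'card⟩ := Finset.exists_subset_card_eq hcard
    set a := T'.orderEmbOfFin hT'card with ha
    have hamem : ∀ k, a k ∈ (Finset.range K).filter (fun n => g n ≠ g (n + 1)) :=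
      fun k => hT'sub (T'.orderEmbOfFin_mem hT'card k)
    have hachange : ∀ k, g (a k) ≠ g (a k + 1) :=
      fun k => (Finset.mem_filter.mp (hamem k)).2
    set t : Fin N → ℝ := fun j => if j ∈ E then 1 else 0 with ht
    have hdlt : ∀ j : Fin N, 2 * j.val < 2 * N := fun j => by have := j.2; omega
    set i : Fin N → ℕ := fun j =>
      if g (a ⟨2 * j.val, hdlt j⟩) = t j then a ⟨2 * j.val, hdlt j⟩
      else a ⟨2 * j.val, hdlt j⟩ + 1 with hi
    have hit : ∀ j, g (i j) = t j := by
      intro j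
      simp only [hi]
      split_ifs with h
      · exact h
      · have h1 := h01 (a ⟨2 * j.val, hdlt j⟩)
        have h2 := h01 (a ⟨2 * j.val, hdlt j⟩ + 1)
        have h3 := hachange ⟨2 * j.val, hdlt j⟩
        have h4 : t j = 0 ∨ t j = 1 := by
          simp only [ht]; split_ifs <;> simp
        clear hachange hamem
        rcases h1 with h1 | h1 <;> rcases h2 with h2 | h2 <;> rcases h4 with h4 | h4 <;>
          simp_all
    have hmono : StrictMono i := by
      intro j j' hjj
      have hjv : j.val < j'.val := hjj
      have hlt1 : 2 * j.val + 1 < 2 * N := by have := j'.2; omega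
      have hub : i j ≤ a ⟨2 * j.val + 1, hlt1⟩ := by
        have h1 : a ⟨2 * j.val, hdlt j⟩ < a ⟨2 * j.val + 1, hlt1⟩ :=
          a.strictMono (by simp [Fin.lt_def])
        simp only [hi]; split_ifs <;> omega
      have hlb : a ⟨2 * j'.val, hdlt j'⟩ ≤ i j' := by
        simp only [hi]; split_ifs <;> omega
      have h2 : a ⟨2 * j.val + 1, hlt1⟩ < a ⟨2 * j'.val, hdlt j'⟩ :=
        a.strictMono (by simp only [Fin.lt_def]; omega)
      omega
    refine hE i hmono x fun j => ⟨fun hj => ?_, fun hj => ?_⟩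
    · have := hit j; simp only [ht, if_pos hj] at this; exact this
    · have := hit j; simp only [ht, if_neg hj] at this; exact this
  · rintro ⟨M, hM⟩
    refine ⟨M + 2, by omega, Finset.univ.filter (fun j => Even (j : ℕ)), ?_⟩
    intro i hi x hpat
    set g := fun n => f n x with hg
    have h01 : ∀ n, g n = 0 ∨ g n = 1 := fun n => hf n x
    have hval : ∀ j : Fin (M + 2), g (i j) = if Even (j : ℕ) then 1 else 0 := by
      intro j
      by_cases h : Even (j : ℕ)
      · rw [if_pos h]; exact (hpat j).1 (by simp [h])
      · rw [if_neg h]; exact (hpat j).2 (by simp [h])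
    have hne : ∀ j : Fin (M + 1), g (i j.castSucc) ≠ g (i j.succ) := by
      intro j
      rw [hval, hval]
      have h1 : (j.castSucc : ℕ) = j.val := rfl
      have h2 : (j.succ : ℕ) = j.val + 1 := rfl
      rw [h1, h2]
      by_cases h : Even j.val <;> simp [h, Nat.even_add_one]
    have hle : ∀ j : Fin (M + 1), i j.castSucc ≤ i j.succ :=
      fun j => (hi (Fin.castSucc_lt_succ : j.castSucc < j.succ)).le
    choose nf hnf1 hnf2 hnf3 using fun j : Fin (M + 1) =>
      exists_change g _ _ (hle j) (hne j)
    set K := i (Fin.last (M + 1)) + 1 with hK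
    have hsum := hM x K
    rw [sum_abs_eq_card g h01 K] at hsum
    have hmem : ∀ j : Fin (M + 1),
        nf j ∈ (Finset.range K).filter (fun n => g n ≠ g (n + 1)) := by
      intro j
      refine Finset.mem_filter.mpr ⟨Finset.mem_range.mpr ?_, hnf3 j⟩
      have h1 : nf j < i j.succ := hnf2 j
      have h2 : i j.succ ≤ i (Fin.last (M + 1)) := hi.monotone (Fin.le_last _)
      omega
    have hinj : Set.InjOn nf ↑(Finset.univ : Finset (Fin (M + 1))) := by
      intro j _ j' _ h
      by_contra hne'
      have key : ∀ p q : Fin (M + 1), p < q → nf p = nf q → False := by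
        intro p q hpq heq
        have h1 : nf p < i p.succ := hnf2 p
        have h2 : i p.succ ≤ i q.castSucc := by
          apply hi.monotone
          rw [Fin.le_def]
          have : p.val < q.val := hpq
          simp only [Fin.val_succ, Fin.coe_castSucc]
          omega
        have h3 : i q.castSucc ≤ nf q := hnf1 q
        omega
      rcases lt_or_gt_of_ne hne' with hlt | hlt
      · exact key j j' hlt h
      · exact key j' j hlt h.symm
    have hcard : M + 1 ≤ ((Finset.range K).filter (fun n => g n ≠ g (n + 1))).card := by
      have := Finset.card_le_card_of_injOn nf (fun j _ => hmem j) hinj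
      simpa using this
    have hle' : ((Finset.range K).filter (fun n => g n ≠ g (n + 1))).card ≤ M := by
      exact_mod_cast hsum
    omega
end

section
/- Let X be a topological space and (f_n)_{n≥0} a sequence of continuous real-valued functions on X with f_0 ≡ 0. Suppose there is a constant M such that ∑_{n=0}^∞ |f_n(x) − f_{n+1}(x)| ≤ M for all x ∈ X. Then the pointwise limit f of (f_n) exists and can be written as f = F_2 − F_1 where F_1 and F_2 are bounded lower semicontinuous functions on X (namely F_1 = ∑ (f_n − f_{n+1})^+ and F_2 = ∑ (f_n − f_{n+1})^−). -/
open Filter Topology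

/-!
Write `g n = f n - f (n + 1)`. Then `f K = -∑_{n<K} g n = ∑_{n<K} (g n)⁻ - ∑_{n<K} (g n)⁺`, and both
partial sums are continuous, increasing in `K` and bounded by `M`, since `(g n)⁺, (g n)⁻ ≤ |g n|`.
Their limits `F₁ = ∑ (g n)⁺` and `F₂ = ∑ (g n)⁻` are therefore bounded suprema of continuous functions,
hence lower semicontinuous, and `f K → F₂ - F₁`.
-/

theorem lowerSemicontinuous_tsum_of_nonneg {ι X : Type*} [TopologicalSpace X] {g : ι → X → ℝ}
    (hg : ∀ i, LowerSemicontinuous (g i)) (hg0 : ∀ i x, 0 ≤ g i x)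
    (hsum : ∀ x, Summable fun i => g i x) :
    LowerSemicontinuous fun x => ∑' i, g i x := by
  have hlub : ∀ x, IsLUB (Set.range fun s : Finset ι => ∑ i ∈ s, g i x) (∑' i, g i x) :=
    fun x => isLUB_hasSum (hg0 · x) (hsum x).hasSum
  simp_rw [fun x => (hlub x).ciSup_eq.symm]
  exact lowerSemicontinuous_ciSup (fun x => (hlub x).bddAbove)
    fun s => lowerSemicontinuous_sum fun i _ => hg i

theorem abs_tsum_le_of_sum_range_le {u : ℕ → ℝ} {M : ℝ} (hu : ∀ n, 0 ≤ u n)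
    (hM : ∀ K, ∑ n ∈ Finset.range K, u n ≤ M) : |∑' n, u n| ≤ M := by
  rw [abs_of_nonneg (tsum_nonneg hu)]
  exact Real.tsum_le_of_sum_range_le hu hM

theorem tendsto_sub_tsum_of_summable_sub_succ {G : Type*} [AddCommGroup G] [TopologicalSpace G]
    [IsTopologicalAddGroup G] (a : ℕ → G) (h : Summable fun n => a n - a (n + 1)) :
    Tendsto a atTop (𝓝 (a 0 - ∑' n, (a n - a (n + 1)))) := by
  have hsum := (tendsto_const_nhds (x := a 0)).sub h.hasSum.tendsto_sum_nat
  simpa only [Finset.sum_range_sub', sub_sub_cancel] using hsum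

/-- If `(f n)` are continuous with `f 0 ≡ 0` and uniformly bounded variation, then
the pointwise limit exists and equals `F₂ - F₁` for bounded lower semicontinuous
functions `F₁, F₂`. -/
theorem stmt_6 {X : Type*} [TopologicalSpace X] (f : ℕ → X → ℝ)
    (hcont : ∀ n, Continuous (f n)) (h0 : ∀ x, f 0 x = 0) (M : ℝ)
    (hM : ∀ x, ∀ K : ℕ, ∑ n ∈ Finset.range K, |f n x - f (n + 1) x| ≤ M) :
    ∃ F₁ F₂ : X → ℝ,
      LowerSemicontinuous F₁ ∧ LowerSemicontinuous F₂ ∧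
      (∃ C : ℝ, ∀ x, |F₁ x| ≤ C) ∧ (∃ C : ℝ, ∀ x, |F₂ x| ≤ C) ∧
      ∀ x, Tendsto (fun n => f n x) atTop (𝓝 (F₂ x - F₁ x)) := by
  set g : ℕ → X → ℝ := fun n x => f n x - f (n + 1) x
  have hg : ∀ n, Continuous (g n) := fun n => (hcont n).sub (hcont (n + 1))
  have habs : ∀ x, Summable fun n => |g n x| :=
    fun x => summable_of_sum_range_le (fun n => abs_nonneg _) (hM x)
  have hpart : ∀ φ : ℝ → ℝ, Continuous φ → (∀ a, 0 ≤ φ a) → (∀ a, φ a ≤ |a|) →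
      (∀ x, Summable fun n => φ (g n x)) ∧ LowerSemicontinuous (fun x => ∑' n, φ (g n x)) ∧
        ∀ x, |∑' n, φ (g n x)| ≤ M := by
    intro φ hφ hφ0 hφabs
    have hsum x : Summable fun n => φ (g n x) :=
      (habs x).of_nonneg_of_le (fun n => hφ0 _) (fun n => hφabs _)
    refine ⟨hsum, lowerSemicontinuous_tsum_of_nonneg
      (fun n => (hφ.comp (hg n)).lowerSemicontinuous) (fun n x => hφ0 _) hsum, fun x => ?_⟩
    exact abs_tsum_le_of_sum_range_le (fun n => hφ0 _)
      fun K => (Finset.sum_le_sum fun n _ => hφabs _).trans (hM x K)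
  obtain ⟨hsum₁, hlsc₁, hbdd₁⟩ := hpart (·⁺) continuous_posPart posPart_nonneg
    fun a => (posPart_add_negPart a).symm ▸ le_add_of_nonneg_right (negPart_nonneg a)
  obtain ⟨hsum₂, hlsc₂, hbdd₂⟩ := hpart (·⁻) continuous_negPart negPart_nonneg
    fun a => (posPart_add_negPart a).symm ▸ le_add_of_nonneg_left (posPart_nonneg a)
  refine ⟨_, _, hlsc₁, hlsc₂, ⟨M, hbdd₁⟩, ⟨M, hbdd₂⟩, fun x => ?_⟩
  have hlim := tendsto_sub_tsum_of_summable_sub_succ (f · x) (habs x).of_abs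
  rwa [h0, zero_sub, ← tsum_congr fun n => posPart_sub_negPart (g n x),
    (hsum₁ x).tsum_sub (hsum₂ x), neg_sub] at hlim
end

section
/- Let X be a topological space and (f_n) a sequence of continuous {0,1}-valued functions on X. Suppose there exist N ≥ 1 and E ⊆ {1,...,N} such that for all i_1 < ... < i_N, ⋂_{j∈E} f_{i_j}^{-1}(1) ∩ ⋂_{j∉E} f_{i_j}^{-1}(0) = ∅. Then (f_n) converges pointwise to a function f which is a difference of two bounded lower semicontinuous functions on X. -/
open Filter Topology

/-- An infinite sum of nonnegative continuous functions (summable everywhere) is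
lower semicontinuous. -/
lemma lsc_tsum_aux {X : Type*} [TopologicalSpace X] (u : ℕ → X → ℝ)
    (hc : ∀ n, Continuous (u n)) (hnn : ∀ n x, 0 ≤ u n x)
    (hsum : ∀ x, Summable (fun n => u n x)) :
    LowerSemicontinuous (fun x => ∑' n, u n x) := by
  intro x y hy
  have htend := (hsum x).hasSum.tendsto_sum_nat
  have hev : ∀ᶠ k in atTop, y < ∑ n ∈ Finset.range k, u n x :=
    htend.eventually (eventually_gt_nhds hy)
  obtain ⟨k, hk⟩ := hev.exists
  have hcont : Continuous (fun z => ∑ n ∈ Finset.range k, u n z) :=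
    continuous_finset_sum _ fun n _ => hc n
  have hopen : ∀ᶠ z in 𝓝 x, y < ∑ n ∈ Finset.range k, u n z :=
    (hcont.continuousAt (x := x)).eventually (eventually_gt_nhds hk)
  filter_upwards [hopen] with z hz
  exact hz.trans_le (Summable.sum_le_tsum _ (fun n _ => hnn n z) (hsum z))

/-- Key combinatorial lemma: under the pattern-avoidance hypothesis, any finite set of
"switch" indices of the sequence `n ↦ f n x` has fewer than `2 * N` elements. -/
lemma card_switches_lt {X : Type*} [TopologicalSpace X] (f : ℕ → X → ℝ)
    (hval : ∀ n x, f n x = 0 ∨ f n x = 1)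
    (N : ℕ) (E : Finset (Fin N))
    (hpat : ∀ i : Fin N → ℕ, StrictMono i →
      ∀ x : X, ¬ (∀ j : Fin N, (j ∈ E → f (i j) x = 1) ∧ (j ∉ E → f (i j) x = 0)))
    (x : X) (T : Finset ℕ) (hT : ∀ n ∈ T, f n x ≠ f (n + 1) x) :
    T.card < 2 * N := by
  by_contra hge
  push_neg at hge
  obtain ⟨T', hT'sub, hT'card⟩ := Finset.exists_subset_card_eq hge
  set s : Fin (2 * N) ↪o ℕ := T'.orderEmbOfFin hT'card with hs
  have hsmem : ∀ j, (s j) ∈ T := fun j => hT'sub (T'.orderEmbOfFin_mem hT'card j)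
  set pv : Fin N → ℝ := fun j => if j ∈ E then 1 else 0 with hpv
  have h2j : ∀ j : Fin N, 2 * (j : ℕ) < 2 * N := fun j => by omega
  have h2j1 : ∀ j : Fin N, 2 * (j : ℕ) + 1 < 2 * N := fun j => by have := j.2; omega
  set m : Fin N → ℕ := fun j => s ⟨2 * j, h2j j⟩ with hm
  set i : Fin N → ℕ := fun j => if f (m j) x = pv j then m j else m j + 1 with hi
  have hival : ∀ j, f (i j) x = pv j := by
    intro j
    by_cases h : f (m j) x = pv j
    · simp [hi, h]
    · have hne : f (m j) x ≠ f (m j + 1) x := hT _ (hsmem ⟨2 * j, h2j j⟩)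
      have h1 := hval (m j) x
      have h2 := hval (m j + 1) x
      have h3 : pv j = 0 ∨ pv j = 1 := by by_cases hje : j ∈ E <;> simp [hpv, hje]
      simp only [hi, if_neg h]
      rcases h1 with h1 | h1 <;> rcases h2 with h2 | h2 <;> rcases h3 with h3 | h3 <;>
        simp only [h1, h2, h3, ne_eq, eq_self_iff_true, not_true_eq_false] at h hne ⊢
  have himono : StrictMono i := by
    intro j j' hjj'
    have hvlt : (j : ℕ) < (j' : ℕ) := hjj'
    have hle1 : i j ≤ m j + 1 := by
      by_cases h : f (m j) x = pv j <;> simp [hi, h]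
    have hle2 : m j' ≤ i j' := by
      by_cases h : f (m j') x = pv j' <;> simp [hi, h]
    have hlt1 : m j < s ⟨2 * j + 1, h2j1 j⟩ := by
      have : (⟨2 * j, h2j j⟩ : Fin (2 * N)) < ⟨2 * j + 1, h2j1 j⟩ := by
        simp [Fin.lt_def]
      exact s.strictMono this
    have hlt2 : s ⟨2 * (j : ℕ) + 1, h2j1 j⟩ < m j' := by
      have : (⟨2 * (j : ℕ) + 1, h2j1 j⟩ : Fin (2 * N)) < ⟨2 * j', h2j j'⟩ := by
        simp only [Fin.lt_def]; omega
      exact s.strictMono this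
    omega
  exact hpat i himono x fun j => ⟨fun hj => by rw [hival j, hpv]; simp [hj],
    fun hj => by rw [hival j, hpv]; simp [hj]⟩

/-- If `(f n)` is a sequence of continuous `{0,1}`-valued functions on a topological
space omitting some fixed pattern along all increasing tuples of indices, then `(f n)`
converges pointwise to a function `f` which is a difference of two bounded lower
semicontinuous functions. -/
theorem stmt_7 {X : Type*} [TopologicalSpace X] (f : ℕ → X → ℝ)
    (hcont : ∀ n, Continuous (f n)) (hval : ∀ n x, f n x = 0 ∨ f n x = 1)
    (N : ℕ) (hN : 1 ≤ N) (E : Finset (Fin N))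
    (hpat : ∀ i : Fin N → ℕ, StrictMono i →
      ∀ x : X, ¬ (∀ j : Fin N, (j ∈ E → f (i j) x = 1) ∧ (j ∉ E → f (i j) x = 0))) :
    ∃ g F₁ F₂ : X → ℝ,
      (∀ x, Tendsto (fun n => f n x) atTop (𝓝 (g x))) ∧
      LowerSemicontinuous F₁ ∧ LowerSemicontinuous F₂ ∧
      (∃ C : ℝ, ∀ x, |F₁ x| ≤ C) ∧ (∃ C : ℝ, ∀ x, |F₂ x| ≤ C) ∧
      (∀ x, g x = F₁ x - F₂ x) := by
  classical
  set pos : ℕ → X → ℝ := fun n x => max (f (n + 1) x - f n x) 0 with hposdef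
  set neg : ℕ → X → ℝ := fun n x => max (f n x - f (n + 1) x) 0 with hnegdef
  -- the switch set is finite at each point
  have hkey := card_switches_lt f hval N E hpat
  have hSfin : ∀ x, {n : ℕ | f n x ≠ f (n + 1) x}.Finite := by
    intro x
    by_contra hinf
    have hinf' : {n : ℕ | f n x ≠ f (n + 1) x}.Infinite := hinf
    obtain ⟨T, hTsub, hTcard⟩ := hinf'.exists_subset_card_eq (2 * N)
    have := hkey x T (fun n hn => hTsub hn)
    omega
  -- supports
  have hpos_supp : ∀ x n, n ∉ (hSfin x).toFinset → pos n x = 0 := by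
    intro x n hn
    simp only [Set.Finite.mem_toFinset, Set.mem_setOf_eq, not_not] at hn
    simp [hposdef, hn]
  have hneg_supp : ∀ x n, n ∉ (hSfin x).toFinset → neg n x = 0 := by
    intro x n hn
    simp only [Set.Finite.mem_toFinset, Set.mem_setOf_eq, not_not] at hn
    simp [hnegdef, hn]
  have hpos_sum : ∀ x, Summable (fun n => pos n x) :=
    fun x => summable_of_ne_finset_zero (hpos_supp x)
  have hneg_sum : ∀ x, Summable (fun n => neg n x) :=
    fun x => summable_of_ne_finset_zero (hneg_supp x)
  have hpos_nn : ∀ n x, 0 ≤ pos n x := fun n x => le_max_right _ _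
  have hneg_nn : ∀ n x, 0 ≤ neg n x := fun n x => le_max_right _ _
  have hterm_le : ∀ n x, pos n x ≤ 1 ∧ neg n x ≤ 1 := by
    intro n x
    rcases hval n x with h | h <;> rcases hval (n + 1) x with h' | h' <;>
      constructor <;> simp [hposdef, hnegdef, h, h']
  -- uniform bounds on the tsums
  have htsum_le : ∀ x, (∑' n, pos n x) ≤ 2 * N ∧ (∑' n, neg n x) ≤ 2 * N := by
    intro x
    have hcard : ((hSfin x).toFinset.card : ℝ) ≤ 2 * N := by
      have := hkey x (hSfin x).toFinset (fun n hn => by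
        simpa [Set.Finite.mem_toFinset] using hn)
      exact_mod_cast this.le
    constructor
    · rw [tsum_eq_sum (hpos_supp x)]
      calc ∑ n ∈ (hSfin x).toFinset, pos n x ≤ ∑ _n ∈ (hSfin x).toFinset, (1 : ℝ) :=
            Finset.sum_le_sum fun n _ => (hterm_le n x).1
        _ = (hSfin x).toFinset.card := by simp
        _ ≤ 2 * N := hcard
    · rw [tsum_eq_sum (hneg_supp x)]
      calc ∑ n ∈ (hSfin x).toFinset, neg n x ≤ ∑ _n ∈ (hSfin x).toFinset, (1 : ℝ) :=
            Finset.sum_le_sum fun n _ => (hterm_le n x).2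
        _ = (hSfin x).toFinset.card := by simp
        _ ≤ 2 * N := hcard
  have htsum_nn : ∀ x, 0 ≤ (∑' n, pos n x) ∧ 0 ≤ (∑' n, neg n x) :=
    fun x => ⟨tsum_nonneg fun n => hpos_nn n x, tsum_nonneg fun n => hneg_nn n x⟩
  refine ⟨fun x => (f 0 x + ∑' n, pos n x) - ∑' n, neg n x,
    fun x => f 0 x + ∑' n, pos n x, fun x => ∑' n, neg n x, ?_, ?_, ?_, ?_, ?_, fun x => rfl⟩
  · -- pointwise convergence via telescoping
    intro x
    have htel : ∀ k, f k x = f 0 x + ∑ n ∈ Finset.range k, pos n x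
        - ∑ n ∈ Finset.range k, neg n x := by
      intro k
      induction k with
      | zero => simp
      | succ k ih =>
        rw [Finset.sum_range_succ, Finset.sum_range_succ]
        have : pos k x - neg k x = f (k + 1) x - f k x := by
          simpa [hposdef, hnegdef, neg_sub] using
            max_zero_sub_max_neg_zero_eq_self (f (k + 1) x - f k x)
        linarith [ih, this]
    have h1 := (hpos_sum x).hasSum.tendsto_sum_nat
    have h2 := (hneg_sum x).hasSum.tendsto_sum_nat
    have := ((tendsto_const_nhds (x := f 0 x)).add h1).sub h2
    simpa only [← htel] using this
  · exact (hcont 0).lowerSemicontinuous.add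
      (lsc_tsum_aux pos (fun n => ((hcont (n + 1)).sub (hcont n)).max continuous_const)
        hpos_nn hpos_sum)
  · exact lsc_tsum_aux neg (fun n => ((hcont n).sub (hcont (n + 1))).max continuous_const)
      hneg_nn hneg_sum
  · refine ⟨1 + 2 * N, fun x => ?_⟩
    have h0 : 0 ≤ f 0 x ∧ f 0 x ≤ 1 := by rcases hval 0 x with h | h <;> simp [h]
    show |f 0 x + ∑' n, pos n x| ≤ 1 + 2 * N
    rw [abs_le]
    constructor <;> nlinarith [(htsum_le x).1, (htsum_nn x).1]
  · refine ⟨2 * N, fun x => ?_⟩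
    show |∑' n, neg n x| ≤ 2 * N
    rw [abs_le]
    constructor <;> nlinarith [(htsum_le x).2, (htsum_nn x).2]
end
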